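/- arXiv:2103.16065 — 4 statements merged into one kernel-verified Lean document; each statement's English description precedes it below -/
import Mathlib

section
/- Let M and K be skew-symmetric real d×d matrices, let S : ℝ^d × ℝ → ℝ be continuously differentiable in its first argument (write ∇_z S for the gradient in the first argument), and let z : ℝ × ℝ → ℝ^d, (x,t) ↦ z(x,t), be twice continuously differentiable. If M ∂_t z + K ∂_x z = ∇_z S(z, x) holds everywhere, then the local energy conservation law ∂_t E + ∂_x F = 0 holds everywhere, where E = S(z, x) − (1/2) zᵀ K ∂_x z and F = (1/2) zᵀ K ∂_t z. -/
/-!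
Along a solution, the chain rule gives `∂ₜ S(z, x) = ∇S · zₜ = (M zₜ + K zₓ) · zₜ = zₜ · K zₓ`,
since `zₜ · M zₜ = 0` for skew `M`. Differentiating the quadratic parts produces the third-order
terms `z · K zₓₜ` and `z · K zₜₓ`, which cancel because the mixed partials of a `C²` map agree;
the remaining terms `-½ zₜ · K zₓ + ½ zₓ · K zₜ` equal `-zₜ · K zₓ` by skew-symmetry of `K`.
-/

open scoped Matrix

noncomputable def dotCLM {d : ℕ} (g : Fin d → ℝ) : (Fin d → ℝ) →L[ℝ] ℝ :=
  ∑ i : Fin d, g i • (ContinuousLinearMap.proj i : (Fin d → ℝ) →L[ℝ] ℝ)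

lemma dotCLM_apply {d : ℕ} (g v : Fin d → ℝ) : dotCLM g v = g ⬝ᵥ v := by
  simp [dotCLM, dotProduct]

namespace Matrix

variable {R n : Type*} [CommRing R] [Fintype n] {A : Matrix n n R}

lemma dotProduct_mulVec_eq_neg_of_transpose_eq_neg (hA : Aᵀ = -A) (v w : n → R) :
    v ⬝ᵥ A *ᵥ w = -(w ⬝ᵥ A *ᵥ v) := by
  rw [dotProduct_mulVec, dotProduct_comm, ← mulVec_transpose, hA, neg_mulVec, dotProduct_neg]

lemma dotProduct_mulVec_self_eq_zero_of_transpose_eq_neg [IsAddTorsionFree R] (hA : Aᵀ = -A)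
    (v : n → R) : v ⬝ᵥ A *ᵥ v = 0 :=
  self_eq_neg.mp (dotProduct_mulVec_eq_neg_of_transpose_eq_neg hA v v)

end Matrix

section Derivatives

variable {𝕜 ι : Type*} [NontriviallyNormedField 𝕜] [Fintype ι] {a b : 𝕜 → ι → 𝕜}
  {a' b' : ι → 𝕜} {t : 𝕜}

theorem HasDerivAt.dotProduct (ha : HasDerivAt a a' t) (hb : HasDerivAt b b' t) :
    HasDerivAt (fun s => a s ⬝ᵥ b s) (a' ⬝ᵥ b t + a t ⬝ᵥ b') t := by
  simp only [_root_.dotProduct, ← Finset.sum_add_distrib]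
  exact HasDerivAt.fun_sum fun i _ => (hasDerivAt_pi.1 ha i).mul (hasDerivAt_pi.1 hb i)

theorem HasDerivAt.mulVec (A : Matrix ι ι 𝕜) (hb : HasDerivAt b b' t) :
    HasDerivAt (fun s => A *ᵥ b s) (A *ᵥ b') t :=
  hasDerivAt_pi.2 fun i => by
    simpa [Matrix.mulVec] using (hasDerivAt_const t (A i)).dotProduct hb

end Derivatives

section PartialDerivatives

variable {E : Type*} [NormedAddCommGroup E] [NormedSpace ℝ E] {f : ℝ × ℝ → E}
  {L : ℝ × ℝ →L[ℝ] E} {x t : ℝ}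

theorem HasFDerivAt.hasDerivAt_fst_slice (h : HasFDerivAt f L (x, t)) :
    HasDerivAt (fun ξ => f (ξ, t)) (L (1, 0)) x :=
  h.comp_hasDerivAt x ((hasDerivAt_id x).prodMk (hasDerivAt_const x t))

theorem HasFDerivAt.hasDerivAt_snd_slice (h : HasFDerivAt f L (x, t)) :
    HasDerivAt (fun τ => f (x, τ)) (L (0, 1)) t :=
  h.comp_hasDerivAt t ((hasDerivAt_const t x).prodMk (hasDerivAt_id t))

theorem ContDiff.exists_hasDerivAt_mixed_partials (hf : ContDiff ℝ 2 f) (x t : ℝ) :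
    ∃ w : E, HasDerivAt (fun τ => deriv (fun ξ => f (ξ, τ)) x) w t ∧
      HasDerivAt (fun ξ => deriv (fun τ => f (ξ, τ)) t) w x := by
  have hf' : ∀ p, HasFDerivAt f (fderiv ℝ f p) p := fun p =>
    (hf.differentiable two_ne_zero p).hasFDerivAt
  have hf'' : HasFDerivAt (fderiv ℝ f) (fderiv ℝ (fderiv ℝ f) (x, t)) (x, t) :=
    ((hf.fderiv_right (m := 1) le_rfl).differentiable one_ne_zero _).hasFDerivAt
  have hx : ∀ τ, deriv (fun ξ => f (ξ, τ)) x = fderiv ℝ f (x, τ) (1, 0) := fun τ =>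
    (hf' _).hasDerivAt_fst_slice.deriv
  have ht : ∀ ξ, deriv (fun τ => f (ξ, τ)) t = fderiv ℝ f (ξ, t) (0, 1) := fun ξ =>
    (hf' _).hasDerivAt_snd_slice.deriv
  refine ⟨fderiv ℝ (fderiv ℝ f) (x, t) (0, 1) (1, 0), ?_, ?_⟩
  · simp only [hx]
    exact (ContinuousLinearMap.apply ℝ E ((1, 0) : ℝ × ℝ)).hasFDerivAt.comp_hasDerivAt t
      hf''.hasDerivAt_snd_slice
  · simp only [ht, second_derivative_symmetric hf' hf'' (0, 1) (1, 0)]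
    exact (ContinuousLinearMap.apply ℝ E ((0, 1) : ℝ × ℝ)).hasFDerivAt.comp_hasDerivAt x
      hf''.hasDerivAt_fst_slice

end PartialDerivatives

theorem stmt0_general {d : ℕ} (M K : Matrix (Fin d) (Fin d) ℝ)
    (hM : Mᵀ = -M) (hK : Kᵀ = -K)
    (S : (Fin d → ℝ) → ℝ → ℝ) (gradS : (Fin d → ℝ) → ℝ → (Fin d → ℝ))
    (hS : ∀ (x : ℝ) (w : Fin d → ℝ), HasFDerivAt (fun w' => S w' x) (dotCLM (gradS w x)) w)
    (z : ℝ → ℝ → (Fin d → ℝ))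
    (hz : ContDiff ℝ 2 fun p : ℝ × ℝ => z p.1 p.2)
    (zt zx : ℝ → ℝ → (Fin d → ℝ))
    (hzt : ∀ x t, zt x t = deriv (fun τ => z x τ) t)
    (hzx : ∀ x t, zx x t = deriv (fun ξ => z ξ t) x)
    (hpde : ∀ x t, M.mulVec (zt x t) + K.mulVec (zx x t) = gradS (z x t) x)
    (E F : ℝ → ℝ → ℝ)
    (hE : ∀ x t, E x t = S (z x t) x - (1/2) * dotProduct (z x t) (K.mulVec (zx x t)))
    (hF : ∀ x t, F x t = (1/2) * dotProduct (z x t) (K.mulVec (zt x t))) :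
    ∀ x t, deriv (fun τ => E x τ) t + deriv (fun ξ => F ξ t) x = 0 := by
  intro x t
  have hdz := (hz.differentiable two_ne_zero (x, t)).hasFDerivAt
  have hz_t : HasDerivAt (fun τ => z x τ) (zt x t) t := by
    rw [hzt]; exact hdz.hasDerivAt_snd_slice.differentiableAt.hasDerivAt
  have hz_x : HasDerivAt (fun ξ => z ξ t) (zx x t) x := by
    rw [hzx]; exact hdz.hasDerivAt_fst_slice.differentiableAt.hasDerivAt
  obtain ⟨w, hzx_t, hzt_x⟩ := hz.exists_hasDerivAt_mixed_partials x t
  simp only [← hzx, ← hzt] at hzx_t hzt_x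
  have hS_t : HasDerivAt (fun τ => S (z x τ) x) (gradS (z x t) x ⬝ᵥ zt x t) t := by
    simpa only [Function.comp_def, dotCLM_apply] using (hS x _).comp_hasDerivAt t hz_t
  have hE_t : HasDerivAt (fun τ => E x τ)
      (gradS (z x t) x ⬝ᵥ zt x t - 1/2 * (zt x t ⬝ᵥ K *ᵥ zx x t + z x t ⬝ᵥ K *ᵥ w)) t := by
    simp only [hE]
    exact hS_t.sub ((hz_t.dotProduct (hzx_t.mulVec K)).const_mul _)
  have hF_x : HasDerivAt (fun ξ => F ξ t)
      (1/2 * (zx x t ⬝ᵥ K *ᵥ zt x t + z x t ⬝ᵥ K *ᵥ w)) x := by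
    simp only [hF]
    exact (hz_x.dotProduct (hzt_x.mulVec K)).const_mul _
  rw [hE_t.deriv, hF_x.deriv, ← hpde, add_dotProduct, dotProduct_comm (M *ᵥ _),
    dotProduct_comm (K *ᵥ _), Matrix.dotProduct_mulVec_self_eq_zero_of_transpose_eq_neg hM,
    Matrix.dotProduct_mulVec_eq_neg_of_transpose_eq_neg hK (zx x t)]
  ring

theorem stmt0 {d : ℕ} (M K : Matrix (Fin d) (Fin d) ℝ)
    (hM : Mᵀ = -M) (hK : Kᵀ = -K)
    (S : (Fin d → ℝ) → ℝ → ℝ) (gradS : (Fin d → ℝ) → ℝ → (Fin d → ℝ))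
    (hS : ∀ (x : ℝ) (w : Fin d → ℝ), HasFDerivAt (fun w' => S w' x) (dotCLM (gradS w x)) w)
    (hSc : ∀ x : ℝ, Continuous fun w => gradS w x)
    (z : ℝ → ℝ → (Fin d → ℝ))
    (hz : ContDiff ℝ 2 fun p : ℝ × ℝ => z p.1 p.2)
    (zt zx : ℝ → ℝ → (Fin d → ℝ))
    (hzt : ∀ x t, zt x t = deriv (fun τ => z x τ) t)
    (hzx : ∀ x t, zx x t = deriv (fun ξ => z ξ t) x)
    (hpde : ∀ x t, M.mulVec (zt x t) + K.mulVec (zx x t) = gradS (z x t) x)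
    (E F : ℝ → ℝ → ℝ)
    (hE : ∀ x t, E x t = S (z x t) x - (1/2) * dotProduct (z x t) (K.mulVec (zx x t)))
    (hF : ∀ x t, F x t = (1/2) * dotProduct (z x t) (K.mulVec (zt x t))) :
    ∀ x t, deriv (fun τ => E x τ) t + deriv (fun ξ => F ξ t) x = 0 :=
  stmt0_general M K hM hK S gradS hS z hz zt zx hzt hzx hpde E F hE hF
end

section
/- Let M, K and L be skew-symmetric real d×d matrices, let S : ℝ^d × ℝ × ℝ → ℝ be continuously differentiable in its first argument (gradient ∇_z S), and let z : ℝ × ℝ × ℝ → ℝ^d, (x,y,t) ↦ z(x,y,t), be twice continuously differentiable. If M ∂_t z + K ∂_x z + L ∂_y z = ∇_z S(z, x, y) holds everywhere, then ∂_t E + ∂_x F + ∂_y G = 0 holds everywhere, where E = S(z, x, y) − (1/2) zᵀ K ∂_x z − (1/2) zᵀ L ∂_y z, F = (1/2) zᵀ K ∂_t z, and G = (1/2) zᵀ L ∂_t z. -/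
/-!
Differentiate `E`, `F`, `G` along the coordinate lines by the chain and product rules. The
second-order terms `z ⬝ K ∂ₜ∂ₓz` and `z ⬝ L ∂ₜ∂ᵧz` cancel by the symmetry of the second
derivative of the `C²` map `z`. What remains is `∇S ⬝ ∂ₜz + ∂ₓz ⬝ K ∂ₜz + ∂ᵧz ⬝ L ∂ₜz`, which
vanishes after substituting the equation for `∇S`, since `a ⬝ M a = 0` and `a ⬝ K b = -(b ⬝ K a)`
for skew-symmetric `M`, `K`.
-/

open scoped Matrix

namespace Matrix

variable {n : Type*} [Fintype n] {K : Matrix n n ℝ}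

lemma dotProduct_mulVec_comm_of_transpose_eq_neg (hK : Kᵀ = -K) (a b : n → ℝ) :
    a ⬝ᵥ K *ᵥ b = -(b ⬝ᵥ K *ᵥ a) := by
  rw [dotProduct_mulVec, ← mulVec_transpose, hK, neg_mulVec, neg_dotProduct, dotProduct_comm]

lemma dotProduct_mulVec_self_of_transpose_eq_neg (hK : Kᵀ = -K) (a : n → ℝ) :
    a ⬝ᵥ K *ᵥ a = 0 := by
  linarith [dotProduct_mulVec_comm_of_transpose_eq_neg hK a a]

end Matrix

section Derivatives

variable {n : Type*} [Fintype n] [DecidableEq n]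

theorem HasDerivAt.dotProduct_mulVec (K : Matrix n n ℝ) {u v : ℝ → n → ℝ} {u' v' : n → ℝ}
    {s : ℝ} (hu : HasDerivAt u u' s) (hv : HasDerivAt v v' s) :
    HasDerivAt (fun s => u s ⬝ᵥ K *ᵥ v s) (u s ⬝ᵥ K *ᵥ v' + u' ⬝ᵥ K *ᵥ v s) s := by
  simpa only [LinearMap.toContinuousBilinearMap_apply, Matrix.toLinearMap₂'_apply'] using
    (Matrix.toLinearMap₂' ℝ K).toContinuousBilinearMap.hasDerivAt_of_bilinear
      (fun _ => hu) (fun _ => hv)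

variable {E F : Type*} [NormedAddCommGroup E] [NormedSpace ℝ E] [NormedAddCommGroup F]
  [NormedSpace ℝ F] {γ : ℝ → E} {v : E} {s : ℝ}

theorem HasDerivAt.fderiv_apply {f : E → F} (hf : DifferentiableAt ℝ (fderiv ℝ f) (γ s))
    (hγ : HasDerivAt γ v s) (w : E) :
    HasDerivAt (fun s => fderiv ℝ f (γ s) w) (fderiv ℝ (fderiv ℝ f) (γ s) v w) s :=
  (ContinuousLinearMap.apply ℝ F w).hasFDerivAt.comp_hasDerivAt s
    (hf.hasFDerivAt.comp_hasDerivAt s hγ)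

theorem HasDerivAt.dotProduct_mulVec_fderiv (K : Matrix n n ℝ) {f : E → n → ℝ}
    (hf : DifferentiableAt ℝ f (γ s)) (hf' : DifferentiableAt ℝ (fderiv ℝ f) (γ s))
    (hγ : HasDerivAt γ v s) (w : E) :
    HasDerivAt (fun s => f (γ s) ⬝ᵥ K *ᵥ fderiv ℝ f (γ s) w)
      (f (γ s) ⬝ᵥ K *ᵥ fderiv ℝ (fderiv ℝ f) (γ s) v w +
        fderiv ℝ f (γ s) v ⬝ᵥ K *ᵥ fderiv ℝ f (γ s) w) s :=
  (hf.hasFDerivAt.comp_hasDerivAt s hγ).dotProduct_mulVec K (hγ.fderiv_apply hf' w)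

end Derivatives

lemma hasDerivAt_prodMk_fst (a b c : ℝ) :
    HasDerivAt (fun ξ : ℝ => (ξ, b, c)) ((1, 0, 0) : ℝ × ℝ × ℝ) a :=
  (hasDerivAt_id a).prodMk ((hasDerivAt_const a b).prodMk (hasDerivAt_const a c))

lemma hasDerivAt_prodMk_snd (a b c : ℝ) :
    HasDerivAt (fun η : ℝ => (a, η, c)) ((0, 1, 0) : ℝ × ℝ × ℝ) b :=
  (hasDerivAt_const b a).prodMk ((hasDerivAt_id b).prodMk (hasDerivAt_const b c))

lemma hasDerivAt_prodMk_thd (a b c : ℝ) :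
    HasDerivAt (fun τ : ℝ => (a, b, τ)) ((0, 0, 1) : ℝ × ℝ × ℝ) c :=
  (hasDerivAt_const c a).prodMk ((hasDerivAt_const c b).prodMk (hasDerivAt_id c))

theorem stmt1_general {d : ℕ} (M K L : Matrix (Fin d) (Fin d) ℝ)
    (hM : Mᵀ = -M) (hK : Kᵀ = -K) (hL : Lᵀ = -L)
    (S : (Fin d → ℝ) → ℝ → ℝ → ℝ) (gradS : (Fin d → ℝ) → ℝ → ℝ → (Fin d → ℝ))
    (hS : ∀ (x y : ℝ) (w : Fin d → ℝ), HasFDerivAt (fun w' => S w' x y) (dotCLM (gradS w x y)) w)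
    (z : ℝ → ℝ → ℝ → (Fin d → ℝ))
    (hz : ContDiff ℝ 2 fun p : ℝ × ℝ × ℝ => z p.1 p.2.1 p.2.2)
    (zt zx zy : ℝ → ℝ → ℝ → (Fin d → ℝ))
    (hzt : ∀ x y t, zt x y t = deriv (fun τ => z x y τ) t)
    (hzx : ∀ x y t, zx x y t = deriv (fun ξ => z ξ y t) x)
    (hzy : ∀ x y t, zy x y t = deriv (fun η => z x η t) y)
    (hpde : ∀ x y t,
      M.mulVec (zt x y t) + K.mulVec (zx x y t) + L.mulVec (zy x y t) = gradS (z x y t) x y)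
    (E F G : ℝ → ℝ → ℝ → ℝ)
    (hE : ∀ x y t, E x y t = S (z x y t) x y
        - (1/2) * dotProduct (z x y t) (K.mulVec (zx x y t))
        - (1/2) * dotProduct (z x y t) (L.mulVec (zy x y t)))
    (hF : ∀ x y t, F x y t = (1/2) * dotProduct (z x y t) (K.mulVec (zt x y t)))
    (hG : ∀ x y t, G x y t = (1/2) * dotProduct (z x y t) (L.mulVec (zt x y t))) :
    ∀ x y t,
      deriv (fun τ => E x y τ) t + deriv (fun ξ => F ξ y t) x + deriv (fun η => G x η t) y = 0 := by
  intro x y t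
  set f : ℝ × ℝ × ℝ → Fin d → ℝ := fun p => z p.1 p.2.1 p.2.2
  have hf : Differentiable ℝ f := hz.differentiable two_ne_zero
  have hf' : Differentiable ℝ (fderiv ℝ f) := (hz.fderiv_right le_rfl).differentiable one_ne_zero
  have hzx' : ∀ a b c, zx a b c = fderiv ℝ f (a, b, c) (1, 0, 0) := fun a b c =>
    (hzx a b c).trans ((hf _).hasFDerivAt.comp_hasDerivAt a (hasDerivAt_prodMk_fst a b c)).deriv
  have hzy' : ∀ a b c, zy a b c = fderiv ℝ f (a, b, c) (0, 1, 0) := fun a b c =>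
    (hzy a b c).trans ((hf _).hasFDerivAt.comp_hasDerivAt b (hasDerivAt_prodMk_snd a b c)).deriv
  have hzt' : ∀ a b c, zt a b c = fderiv ℝ f (a, b, c) (0, 0, 1) := fun a b c =>
    (hzt a b c).trans ((hf _).hasFDerivAt.comp_hasDerivAt c (hasDerivAt_prodMk_thd a b c)).deriv
  simp only [hzx', hzy', hzt'] at hpde hE hF hG
  have hSt := (hS x y (f (x, y, t))).comp_hasDerivAt t
    ((hf _).hasFDerivAt.comp_hasDerivAt t (hasDerivAt_prodMk_thd x y t))
  have hEt := ((hSt.sub ((HasDerivAt.dotProduct_mulVec_fderiv K (hf _) (hf' _)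
      (hasDerivAt_prodMk_thd x y t) (1, 0, 0)).const_mul (1 / 2))).sub
    ((HasDerivAt.dotProduct_mulVec_fderiv L (hf _) (hf' _)
      (hasDerivAt_prodMk_thd x y t) (0, 1, 0)).const_mul (1 / 2))).congr_of_eventuallyEq
    (.of_forall fun τ => hE x y τ)
  have hFx := ((HasDerivAt.dotProduct_mulVec_fderiv K (hf _) (hf' _)
      (hasDerivAt_prodMk_fst x y t) (0, 0, 1)).const_mul (1 / 2)).congr_of_eventuallyEq
    (.of_forall fun ξ => hF ξ y t)
  have hGy := ((HasDerivAt.dotProduct_mulVec_fderiv L (hf _) (hf' _)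
      (hasDerivAt_prodMk_snd x y t) (0, 0, 1)).const_mul (1 / 2)).congr_of_eventuallyEq
    (.of_forall fun η => hG x η t)
  have hsymm := (hz.contDiffAt (x := (x, y, t))).isSymmSndFDerivAt (by simp)
  rw [hEt.deriv, hFx.deriv, hGy.deriv, dotCLM_apply, ← hpde]
  rw [hsymm (1, 0, 0), hsymm (0, 1, 0)]
  set a := fderiv ℝ f (x, y, t) (0, 0, 1)
  set b := fderiv ℝ f (x, y, t) (1, 0, 0)
  set c := fderiv ℝ f (x, y, t) (0, 1, 0)
  rw [add_dotProduct, add_dotProduct, dotProduct_comm (M *ᵥ a), dotProduct_comm (K *ᵥ b),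
    dotProduct_comm (L *ᵥ c)]
  linarith [M.dotProduct_mulVec_self_of_transpose_eq_neg hM a,
    K.dotProduct_mulVec_comm_of_transpose_eq_neg hK a b,
    L.dotProduct_mulVec_comm_of_transpose_eq_neg hL a c]

theorem stmt1 {d : ℕ} (M K L : Matrix (Fin d) (Fin d) ℝ)
    (hM : Mᵀ = -M) (hK : Kᵀ = -K) (hL : Lᵀ = -L)
    (S : (Fin d → ℝ) → ℝ → ℝ → ℝ) (gradS : (Fin d → ℝ) → ℝ → ℝ → (Fin d → ℝ))
    (hS : ∀ (x y : ℝ) (w : Fin d → ℝ), HasFDerivAt (fun w' => S w' x y) (dotCLM (gradS w x y)) w)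
    (hSc : ∀ x y : ℝ, Continuous fun w => gradS w x y)
    (z : ℝ → ℝ → ℝ → (Fin d → ℝ))
    (hz : ContDiff ℝ 2 fun p : ℝ × ℝ × ℝ => z p.1 p.2.1 p.2.2)
    (zt zx zy : ℝ → ℝ → ℝ → (Fin d → ℝ))
    (hzt : ∀ x y t, zt x y t = deriv (fun τ => z x y τ) t)
    (hzx : ∀ x y t, zx x y t = deriv (fun ξ => z ξ y t) x)
    (hzy : ∀ x y t, zy x y t = deriv (fun η => z x η t) y)
    (hpde : ∀ x y t,
      M.mulVec (zt x y t) + K.mulVec (zx x y t) + L.mulVec (zy x y t) = gradS (z x y t) x y)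
    (E F G : ℝ → ℝ → ℝ → ℝ)
    (hE : ∀ x y t, E x y t = S (z x y t) x y
        - (1/2) * dotProduct (z x y t) (K.mulVec (zx x y t))
        - (1/2) * dotProduct (z x y t) (L.mulVec (zy x y t)))
    (hF : ∀ x y t, F x y t = (1/2) * dotProduct (z x y t) (K.mulVec (zt x y t)))
    (hG : ∀ x y t, G x y t = (1/2) * dotProduct (z x y t) (L.mulVec (zt x y t))) :
    ∀ x y t,
      deriv (fun τ => E x y τ) t + deriv (fun ξ => F ξ y t) x + deriv (fun η => G x η t) y = 0 :=
  stmt1_general M K L hM hK hL S gradS hS z hz zt zx zy hzt hzx hzy hpde E F G hE hF hG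
end

section
/- Assume the CRK setup. Let Δt ∈ ℝ, let K be any real d×d matrix, let D be a real N×N matrix, and for j = 0, …, N−1 let δ_t z_j : [0,1] → ℝ^d be continuous, z_j⁰ ∈ ℝ^d, and z_j(τ) = z_j⁰ + Δt ∫₀¹ A_{τ,σ} δ_t z_j(σ) dσ. Define δ_x z_j(τ) = Σ_{k=0}^{N−1} D_{jk} z_k(τ) and δ_x δ_t z_j(τ) = Σ_{k=0}^{N−1} D_{jk} δ_t z_k(τ). Then for every j, z_j(1)ᵀ K δ_x z_j(1) − z_j(0)ᵀ K δ_x z_j(0) = Δt Σ_{i=1}^s b_i ⟨δ_t z_j⟩_iᵀ K ⟨δ_x z_j⟩_i + Δt Σ_{i=1}^s b_i ⟨z_j⟩_iᵀ K ⟨δ_x δ_t z_j⟩_i. -/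
open scoped Matrix

noncomputable def lag {s : ℕ} (c : Fin s → ℝ) (i : Fin s) (τ : ℝ) : ℝ :=
  (Lagrange.basis (Finset.univ : Finset (Fin s)) c i).eval τ

noncomputable def bw {s : ℕ} (c : Fin s → ℝ) (i : Fin s) : ℝ :=
  ∫ τ in (0:ℝ)..1, lag c i τ

noncomputable def Acrk {s : ℕ} (c : Fin s → ℝ) (τ σ : ℝ) : ℝ :=
  ∑ i : Fin s, (1 / bw c i) * (∫ α in (0:ℝ)..τ, lag c i α) * lag c i σ

noncomputable def wavg {s : ℕ} (c : Fin s → ℝ) (i : Fin s) {G : Type*}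
    [NormedAddCommGroup G] [NormedSpace ℝ G] (f : ℝ → G) : G :=
  (1 / bw c i) • ∫ τ in (0:ℝ)..1, lag c i τ • f τ

/-!
Because `A_{τ,σ}` separates variables, `z_j(τ) = z_j⁰ + Δt ∑ᵢ (∫₀^τ lᵢ) ⟨δ_t z_j⟩ᵢ`, so `z_j` is
differentiable with `z_j' = Δt ∑ᵢ lᵢ ⟨δ_t z_j⟩ᵢ`; by linearity of `⟨·⟩ᵢ` also
`(δ_x z_j)' = Δt ∑ᵢ lᵢ ⟨δ_x δ_t z_j⟩ᵢ`. The fundamental theorem of calculus for the product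
`τ ↦ z_j(τ)ᵀ K δ_x z_j(τ)` together with `∫₀¹ lᵢ f = bᵢ ⟨f⟩ᵢ` then gives the identity, for any
continuous bilinear map in place of `K`.
-/

section

open MeasureTheory

variable {s : ℕ} (c : Fin s → ℝ)
variable {E F G : Type*} [NormedAddCommGroup E] [NormedSpace ℝ E]
  [NormedAddCommGroup F] [NormedSpace ℝ F] [NormedAddCommGroup G] [NormedSpace ℝ G]

theorem continuous_lag (i : Fin s) : Continuous (lag c i) :=
  (Lagrange.basis Finset.univ c i).continuous

noncomputable def lagAntideriv (i : Fin s) (τ : ℝ) : ℝ :=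
  ∫ α in (0:ℝ)..τ, lag c i α

theorem hasDerivAt_lagAntideriv (i : Fin s) (τ : ℝ) :
    HasDerivAt (lagAntideriv c i) (lag c i τ) τ :=
  ((continuous_lag c i).integral_hasStrictDerivAt 0 τ).hasDerivAt

noncomputable def stageInterp (g : ℝ → E) (τ : ℝ) : E :=
  ∑ i, lag c i τ • wavg c i g

theorem continuous_stageInterp (g : ℝ → E) : Continuous (stageInterp c g) :=
  continuous_finsetSum _ fun i _ => (continuous_lag c i).smul continuous_const

theorem integral_Acrk_smul {g : ℝ → E} (hg : IntervalIntegrable g volume 0 1) (τ : ℝ) :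
    ∫ σ in (0:ℝ)..1, Acrk c τ σ • g σ = ∑ i, lagAntideriv c i τ • wavg c i g := by
  have hint : ∀ i ∈ Finset.univ, IntervalIntegrable
      (fun σ => ((1 / bw c i) * lagAntideriv c i τ) • (lag c i σ • g σ)) volume 0 1 :=
    fun i _ => ((hg.continuousOn_smul (continuous_lag c i).continuousOn).smul _)
  have hA : ∀ σ, Acrk c τ σ • g σ
      = ∑ i, ((1 / bw c i) * lagAntideriv c i τ) • (lag c i σ • g σ) := fun σ => by
    simp only [Acrk, lagAntideriv, Finset.sum_smul, smul_smul]
  simp_rw [hA, intervalIntegral.integral_finsetSum hint, intervalIntegral.integral_smul]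
  refine Finset.sum_congr rfl fun i _ => ?_
  rw [wavg, smul_smul, mul_comm]

theorem hasDerivAt_integral_Acrk_smul {g : ℝ → E} (hg : IntervalIntegrable g volume 0 1)
    (τ : ℝ) :
    HasDerivAt (fun τ => ∫ σ in (0:ℝ)..1, Acrk c τ σ • g σ) (stageInterp c g τ) τ := by
  simp_rw [integral_Acrk_smul c hg]
  exact HasDerivAt.fun_sum fun i _ => (hasDerivAt_lagAntideriv c i τ).smul_const _

theorem wavg_sum_smul {ι : Type*} (t : Finset ι) (a : ι → ℝ) {g : ι → ℝ → E}
    (hg : ∀ k ∈ t, IntervalIntegrable (g k) volume 0 1) (i : Fin s) :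
    wavg c i (fun τ => ∑ k ∈ t, a k • g k τ) = ∑ k ∈ t, a k • wavg c i (g k) := by
  have hint : ∀ k ∈ t, IntervalIntegrable (fun τ => a k • lag c i τ • g k τ) volume 0 1 :=
    fun k hk => ((hg k hk).continuousOn_smul (continuous_lag c i).continuousOn).smul _
  simp_rw [wavg, Finset.smul_sum, smul_comm (lag c i _) (a _)]
  rw [intervalIntegral.integral_finsetSum hint, Finset.smul_sum]
  simp_rw [intervalIntegral.integral_smul, smul_comm (1 / bw c i)]

theorem stageInterp_sum_smul {ι : Type*} (t : Finset ι) (a : ι → ℝ) {g : ι → ℝ → E}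
    (hg : ∀ k ∈ t, IntervalIntegrable (g k) volume 0 1) (τ : ℝ) :
    stageInterp c (fun τ => ∑ k ∈ t, a k • g k τ) τ = ∑ k ∈ t, a k • stageInterp c (g k) τ := by
  simp_rw [stageInterp, wavg_sum_smul c t a hg, Finset.smul_sum, smul_comm (lag c _ τ) (a _)]
  exact Finset.sum_comm

theorem integral_lag_smul {i : Fin s} (hb : bw c i ≠ 0) (g : ℝ → E) :
    ∫ τ in (0:ℝ)..1, lag c i τ • g τ = bw c i • wavg c i g := by
  rw [wavg, smul_smul, mul_one_div_cancel hb, one_smul]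

theorem integral_bilinear_stageInterp_left [CompleteSpace F] [CompleteSpace G]
    (hb : ∀ i, bw c i ≠ 0) (B : E →L[ℝ] F →L[ℝ] G) (g : ℝ → E) {w : ℝ → F}
    (hw : IntervalIntegrable w volume 0 1) :
    ∫ τ in (0:ℝ)..1, B (stageInterp c g τ) (w τ) = ∑ i, bw c i • B (wavg c i g) (wavg c i w) := by
  have hint : ∀ i, IntervalIntegrable (fun τ => lag c i τ • w τ) volume 0 1 :=
    fun i => hw.continuousOn_smul (continuous_lag c i).continuousOn
  have hexp : ∀ τ, B (stageInterp c g τ) (w τ) = ∑ i, B (wavg c i g) (lag c i τ • w τ) :=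
    fun τ => by simp [stageInterp]
  simp_rw [hexp]
  rw [intervalIntegral.integral_finsetSum fun i _ =>
    ⟨(B (wavg c i g)).integrable_comp (hint i).1, (B (wavg c i g)).integrable_comp (hint i).2⟩]
  refine Finset.sum_congr rfl fun i _ => ?_
  rw [(B (wavg c i g)).intervalIntegral_comp_comm (hint i), integral_lag_smul c (hb i), map_smul]

theorem integral_bilinear_stageInterp_right [CompleteSpace E] [CompleteSpace G]
    (hb : ∀ i, bw c i ≠ 0) (B : E →L[ℝ] F →L[ℝ] G) {w : ℝ → E} (g : ℝ → F)
    (hw : IntervalIntegrable w volume 0 1) :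
    ∫ τ in (0:ℝ)..1, B (w τ) (stageInterp c g τ) = ∑ i, bw c i • B (wavg c i w) (wavg c i g) :=
  integral_bilinear_stageInterp_left c hb B.flip g hw

theorem bilinear_sub_eq_of_hasDerivAt_stageInterp [CompleteSpace E] [CompleteSpace F]
    [CompleteSpace G] (hb : ∀ i, bw c i ≠ 0) (B : E →L[ℝ] F →L[ℝ] G) (Δt : ℝ)
    {x g : ℝ → E} {w h : ℝ → F} (hx : ∀ τ, HasDerivAt x (Δt • stageInterp c g τ) τ)
    (hw : ∀ τ, HasDerivAt w (Δt • stageInterp c h τ) τ) :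
    B (x 1) (w 1) - B (x 0) (w 0)
      = Δt • ∑ i, bw c i • B (wavg c i g) (wavg c i w)
        + Δt • ∑ i, bw c i • B (wavg c i x) (wavg c i h) := by
  have hxc : Continuous x := continuous_iff_continuousAt.2 fun τ => (hx τ).continuousAt
  have hwc : Continuous w := continuous_iff_continuousAt.2 fun τ => (hw τ).continuousAt
  have hgc := continuous_stageInterp c g
  have hhc := continuous_stageInterp c h
  have hderiv : ∀ τ, HasDerivAt (fun τ => B (x τ) (w τ))
      (Δt • B (stageInterp c g τ) (w τ) + Δt • B (x τ) (stageInterp c h τ)) τ := fun τ => by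
    simpa [add_comm] using B.hasDerivAt_of_bilinear (fun _ => hx τ) (fun _ => hw τ)
  rw [← intervalIntegral.integral_eq_sub_of_hasDerivAt (fun τ _ => hderiv τ)
      ((by fun_prop : Continuous _).intervalIntegrable 0 1),
    intervalIntegral.integral_add ((by fun_prop : Continuous _).intervalIntegrable 0 1)
      ((by fun_prop : Continuous _).intervalIntegrable 0 1),
    intervalIntegral.integral_smul, intervalIntegral.integral_smul,
    integral_bilinear_stageInterp_left c hb B g (hwc.intervalIntegrable 0 1),
    integral_bilinear_stageInterp_right c hb B h (hxc.intervalIntegrable 0 1)]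

end

theorem stmt5_general {s d N : ℕ} (c : Fin s → ℝ)
    (hb : ∀ i, bw c i ≠ 0)
    (Δt : ℝ) (K : Matrix (Fin d) (Fin d) ℝ) (D : Matrix (Fin N) (Fin N) ℝ)
    (δtz : Fin N → ℝ → (Fin d → ℝ)) (hδtc : ∀ j, ContinuousOn (δtz j) (Set.Icc 0 1))
    (z0 : Fin N → Fin d → ℝ) (z : Fin N → ℝ → (Fin d → ℝ))
    (hz : ∀ j τ, z j τ = z0 j + Δt • ∫ σ in (0:ℝ)..1, Acrk c τ σ • δtz j σ)
    (δxz : Fin N → ℝ → (Fin d → ℝ))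
    (hδx : ∀ j τ, δxz j τ = ∑ k, D j k • z k τ)
    (δxδtz : Fin N → ℝ → (Fin d → ℝ))
    (hδxδt : ∀ j τ, δxδtz j τ = ∑ k, D j k • δtz k τ) :
    ∀ j, dotProduct (z j 1) (K.mulVec (δxz j 1))
        - dotProduct (z j 0) (K.mulVec (δxz j 0))
      = Δt * ∑ i, bw c i * dotProduct (wavg c i (δtz j)) (K.mulVec (wavg c i (δxz j)))
        + Δt * ∑ i, bw c i * dotProduct (wavg c i (z j)) (K.mulVec (wavg c i (δxδtz j))) := by
  intro j
  have hint k : IntervalIntegrable (δtz k) MeasureTheory.volume 0 1 :=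
    (hδtc k).intervalIntegrable_of_Icc zero_le_one
  have hz' k τ : HasDerivAt (z k) (Δt • stageInterp c (δtz k) τ) τ := by
    rw [show z k = _ from funext (hz k)]
    exact ((hasDerivAt_integral_Acrk_smul c (hint k) τ).const_smul Δt).const_add (z0 k)
  have hδx' τ : HasDerivAt (δxz j) (Δt • stageInterp c (δxδtz j) τ) τ := by
    rw [show δxz j = _ from funext (hδx j), show δxδtz j = _ from funext (hδxδt j),
      stageInterp_sum_smul c _ _ fun k _ => hint k, Finset.smul_sum]
    simp_rw [smul_comm Δt]
    exact HasDerivAt.fun_sum fun k _ => (hz' k τ).const_smul (D j k)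
  simpa [Matrix.toLinearMap₂'_apply'] using bilinear_sub_eq_of_hasDerivAt_stageInterp c hb
    (Matrix.toLinearMap₂' ℝ K).toContinuousBilinearMap Δt (hz' j) hδx'

theorem stmt5 {s d N : ℕ} (hs : 1 ≤ s) (c : Fin s → ℝ) (hc : Function.Injective c)
    (hb : ∀ i, bw c i ≠ 0)
    (Δt : ℝ) (K : Matrix (Fin d) (Fin d) ℝ) (D : Matrix (Fin N) (Fin N) ℝ)
    (δtz : Fin N → ℝ → (Fin d → ℝ)) (hδtc : ∀ j, ContinuousOn (δtz j) (Set.Icc 0 1))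
    (z0 : Fin N → Fin d → ℝ) (z : Fin N → ℝ → (Fin d → ℝ))
    (hz : ∀ j τ, z j τ = z0 j + Δt • ∫ σ in (0:ℝ)..1, Acrk c τ σ • δtz j σ)
    (δxz : Fin N → ℝ → (Fin d → ℝ))
    (hδx : ∀ j τ, δxz j τ = ∑ k, D j k • z k τ)
    (δxδtz : Fin N → ℝ → (Fin d → ℝ))
    (hδxδt : ∀ j τ, δxδtz j τ = ∑ k, D j k • δtz k τ) :
    ∀ j, dotProduct (z j 1) (K.mulVec (δxz j 1))
        - dotProduct (z j 0) (K.mulVec (δxz j 0))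
      = Δt * ∑ i, bw c i * dotProduct (wavg c i (δtz j)) (K.mulVec (wavg c i (δxz j)))
        + Δt * ∑ i, bw c i * dotProduct (wavg c i (z j)) (K.mulVec (wavg c i (δxδtz j))) :=
  stmt5_general c hb Δt K D δtz hδtc z0 z hz δxz hδx δxδtz hδxδt
end

section
/- Let K be any real d×d matrix, Δx ∈ ℝ, and let b̃_1, …, b̃_r and (ã_{jk})_{1≤j,k≤r} be real Runge–Kutta coefficients satisfying the symplecticity condition b̃_j b̃_k − b̃_j ã_{jk} − b̃_k ã_{kj} = 0 for all j, k. Let z_n, δ_t z_n ∈ ℝ^d and, for j = 1, …, r, let z_{n,j}, δ_t z_{n,j}, δ_x z_{n,j}, δ_x δ_t z_{n,j} ∈ ℝ^d satisfy z_{n,j} = z_n + Δx Σ_{k=1}^r ã_{jk} δ_x z_{n,k} and δ_t z_{n,j} = δ_t z_n + Δx Σ_{k=1}^r ã_{jk} δ_x δ_t z_{n,k}, and define z_{n+1} = z_n + Δx Σ_{j=1}^r b̃_j δ_x z_{n,j} and δ_t z_{n+1} = δ_t z_n + Δx Σ_{j=1}^r b̃_j δ_x δ_t z_{n,j}. Then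 z_{n+1}ᵀ K δ_t z_{n+1} − z_nᵀ K δ_t z_n = Δx Σ_{j=1}^r b̃_j ( z_{n,j}ᵀ K δ_x δ_t z_{n,j} + (δ_x z_{n,j})ᵀ K δ_t z_{n,j} ). -/
open scoped Matrix

/-! Expanding both sides by bilinearity, the terms of first order in the step size `h` agree
directly. The second-order terms are `h² B(∑ b_j y'_j, ∑ b_k w'_k)` on the left and
`h² ∑_{j,k} b_j a_{jk} (B(y'_k, w'_j) + B(y'_j, w'_k))` on the right; after exchanging the
summation indices in the first half of the latter, their equality is precisely
`b_j b_k = b_j a_{jk} + b_k a_{kj}`. The theorem is the case `B(v, w) = vᵀ K w`. -/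

def IsSymplecticRK {R ι : Type*} [CommRing R] (b : ι → R) (a : Matrix ι ι R) : Prop :=
  ∀ j k, b j * b k - b j * a j k - b k * a k j = 0

section RungeKutta
variable {R M N P ι : Type*} [CommRing R] [AddCommGroup M] [Module R M] [AddCommGroup N]
  [Module R N] [AddCommGroup P] [Module R P] [Fintype ι]

lemma LinearMap.sum_smul_map₂_add_smul (B : M →ₗ[R] N →ₗ[R] P) (b : ι → R) (h : R)
    (y₀ : M) (w₀ : N) (y' Y : ι → M) (w' W : ι → N) :
    ∑ j, b j • (B (y₀ + h • Y j) (w' j) + B (y' j) (w₀ + h • W j))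
      = B y₀ (∑ j, b j • w' j) + B (∑ j, b j • y' j) w₀
        + h • ∑ j, b j • (B (Y j) (w' j) + B (y' j) (W j)) := by
  simp only [map_add, map_smul, map_sum, LinearMap.add_apply, LinearMap.smul_apply,
    LinearMap.sum_apply, smul_add, Finset.sum_add_distrib, Finset.smul_sum, smul_comm h]
  abel

lemma IsSymplecticRK.map₂_sum_smul_sum_smul {b : ι → R} {a : Matrix ι ι R}
    (hs : IsSymplecticRK b a) (B : M →ₗ[R] N →ₗ[R] P) (y : ι → M) (w : ι → N) :
    B (∑ j, b j • y j) (∑ k, b k • w k)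
      = ∑ j, b j • (B (∑ k, a j k • y k) (w j) + B (y j) (∑ k, a j k • w k)) := by
  have hbb : ∀ j k, b j * b k = b j * a j k + b k * a k j := fun j k => by
    linear_combination hs j k
  simp only [map_sum, map_smul, LinearMap.sum_apply, LinearMap.smul_apply, Finset.smul_sum,
    smul_add, Finset.sum_add_distrib, smul_smul, hbb, add_smul]
  congr 1
  exact Finset.sum_comm

theorem IsSymplecticRK.map₂_step_sub {b : ι → R} {a : Matrix ι ι R} (hs : IsSymplecticRK b a)
    (B : M →ₗ[R] N →ₗ[R] P) (h : R) (y₀ : M) (w₀ : N) (y' : ι → M) (w' : ι → N) :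
    B (y₀ + h • ∑ j, b j • y' j) (w₀ + h • ∑ j, b j • w' j) - B y₀ w₀
      = h • ∑ j, b j • (B (y₀ + h • ∑ k, a j k • y' k) (w' j)
          + B (y' j) (w₀ + h • ∑ k, a j k • w' k)) := by
  rw [LinearMap.sum_smul_map₂_add_smul, ← hs.map₂_sum_smul_sum_smul]
  simp only [map_add, map_smul, LinearMap.add_apply, LinearMap.smul_apply]
  module

end RungeKutta

theorem stmt12 {d r : ℕ} (K : Matrix (Fin d) (Fin d) ℝ) (Δx : ℝ)
    (bt : Fin r → ℝ) (a : Matrix (Fin r) (Fin r) ℝ)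
    (hsymp : ∀ j k, bt j * bt k - bt j * a j k - bt k * a k j = 0)
    (zn δtzn : Fin d → ℝ) (z δtz δxz δxδtz : Fin r → Fin d → ℝ)
    (hz : ∀ j, z j = zn + Δx • ∑ k, a j k • δxz k)
    (hδt : ∀ j, δtz j = δtzn + Δx • ∑ k, a j k • δxδtz k)
    (zn1 δtzn1 : Fin d → ℝ)
    (hzn1 : zn1 = zn + Δx • ∑ j, bt j • δxz j)
    (hδtzn1 : δtzn1 = δtzn + Δx • ∑ j, bt j • δxδtz j) :
    dotProduct zn1 (K.mulVec δtzn1) - dotProduct zn (K.mulVec δtzn)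
      = Δx * ∑ j, bt j * (dotProduct (z j) (K.mulVec (δxδtz j))
          + dotProduct (δxz j) (K.mulVec (δtz j))) := by
  have hstep := IsSymplecticRK.map₂_step_sub hsymp (Matrix.toLinearMap₂' ℝ K) Δx zn δtzn δxz δxδtz
  simpa only [Matrix.toLinearMap₂'_apply', smul_eq_mul, ← hz, ← hδt, ← hzn1, ← hδtzn1] using hstep
end
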